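/- arXiv:1907.06125 — 2 statements merged into one kernel-verified Lean document; each statement's English description precedes it below -/
import Mathlib

section
/- Let A be a commutative ring, B a commutative A-algebra, x, y ∈ B, and m, n natural numbers. If x is m-integral over A and y is n-integral over A, then x·y is (n·m)-integral over A. -/
/-! Spanned by `x ^ i` (`i < m`) and `y ^ j` (`j < n`), the subalgebras `A[x]` and `A[y]` multiply
to `A[x, y]`, which is therefore spanned as an `A`-module by the `m * n` products `x ^ i * y ^ j`.
Cayley–Hamilton for multiplication by `x * y` on this module, evaluated at `1`, gives a monic
polynomial of degree at most `m * n` killing `x * y`; a factor `X ^ d` makes the degree exactly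
`m * n`. -/

open Polynomial Submodule
open scoped Pointwise

def IsIntegralOfDegree (A : Type*) {B : Type*} [CommRing A] [Ring B] [Algebra A B] (u : B)
    (k : ℕ) : Prop :=
  ∃ P : A[X], P.Monic ∧ P.natDegree = k ∧ aeval u P = 0

namespace IsIntegralOfDegree

variable {A B : Type*} [CommRing A]

section Ring

variable [Ring B] [Algebra A B] {u : B} {k : ℕ}

theorem mono [Nontrivial A] (h : IsIntegralOfDegree A u k) {l : ℕ} (hkl : k ≤ l) :
    IsIntegralOfDegree A u l := by
  obtain ⟨P, hP, hPk, hPu⟩ := h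
  refine ⟨P * X ^ (l - k), hP.mul (monic_X_pow _), ?_, by simp [hPu]⟩
  rw [hP.natDegree_mul (monic_X_pow _), natDegree_X_pow, hPk]
  omega

theorem map {C : Type*} [Ring C] [Algebra A C] (h : IsIntegralOfDegree A u k) (f : B →ₐ[A] C) :
    IsIntegralOfDegree A (f u) k := by
  obtain ⟨P, hP, hPk, hPu⟩ := h
  exact ⟨P, hP, hPk, by rw [aeval_algHom_apply, hPu, map_zero]⟩

/-- Cayley–Hamilton for multiplication by `u`, evaluated at `1`. -/
theorem of_finite [Module.Finite A B] (u : B) :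
    IsIntegralOfDegree A u (⊤ : Submodule A B).spanFinrank := by
  obtain ⟨P, hP, hPk, hPu⟩ :=
    LinearMap.exists_monic_and_natDegree_eq_and_aeval_eq_zero A (Algebra.lmul A B u)
  rw [aeval_algHom_apply] at hPu
  exact ⟨P, hP, hPk, by simpa using LinearMap.congr_fun hPu 1⟩

end Ring

variable [CommRing B] [Algebra A B] {x y : B} {m n : ℕ}

theorem aeval_mem_span_pow [Nontrivial A] [DecidableEq B] (h : IsIntegralOfDegree A x m)
    (q : A[X]) :
    aeval x q ∈ span A ((Finset.range m).image (x ^ ·) : Set B) := by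
  classical
  obtain ⟨P, hP, hPm, hPx⟩ := h
  have hdeg : q %ₘ P ∈ degreeLT A m := by
    rw [mem_degreeLT, ← hPm, ← degree_eq_natDegree hP.ne_zero]
    exact degree_modByMonic_lt q hP
  have hmem := mem_map_of_mem (f := (aeval x).toLinearMap) hdeg
  rw [degreeLT_eq_span_X_pow, map_span, Finset.coe_image, ← Set.image_comp] at hmem
  simpa [Function.comp_def, aeval_modByMonic_eq_self_of_root hPx] using hmem

theorem toSubmodule_adjoin_eq_span_pow [Nontrivial A] [DecidableEq B]
    (h : IsIntegralOfDegree A x m) :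
    Subalgebra.toSubmodule (Algebra.adjoin A {x}) =
      span A ((Finset.range m).image (x ^ ·) : Set B) := by
  refine le_antisymm ?_ (span_le.mpr ?_)
  · intro z hz
    rw [Subalgebra.mem_toSubmodule, Algebra.adjoin_singleton_eq_range_aeval] at hz
    obtain ⟨q, rfl⟩ := hz
    exact h.aeval_mem_span_pow q
  · simp only [Finset.coe_image, Set.image_subset_iff]
    exact fun i _ => Subalgebra.pow_mem _ (Algebra.self_mem_adjoin_singleton A x) i

theorem toSubmodule_adjoin_pair_eq_span [Nontrivial A] [DecidableEq B]
    (hx : IsIntegralOfDegree A x m) (hy : IsIntegralOfDegree A y n) :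
    Subalgebra.toSubmodule (Algebra.adjoin A {x, y}) =
      span A ↑((Finset.range m).image (x ^ ·) * (Finset.range n).image (y ^ ·)) := by
  rw [show ({x, y} : Set B) = {x} ∪ {y} from rfl, Algebra.adjoin_union_coe_submodule,
    hx.toSubmodule_adjoin_eq_span_pow, hy.toSubmodule_adjoin_eq_span_pow, span_mul_span,
    Finset.coe_mul]

theorem mul (hx : IsIntegralOfDegree A x m) (hy : IsIntegralOfDegree A y n) :
    IsIntegralOfDegree A (x * y) (m * n) := by
  classical
  -- over the zero ring every polynomial has degree `0`, so `mono` is unavailable there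
  cases subsingleton_or_nontrivial A
  · obtain ⟨P, -, rfl, -⟩ := hx
    exact ⟨0, Subsingleton.elim _ _, by simp [Subsingleton.elim P 0], map_zero _⟩
  set S := Algebra.adjoin A {x, y}
  set G := (Finset.range m).image (x ^ ·) * (Finset.range n).image (y ^ ·)
  have hS : Subalgebra.toSubmodule S = span A G := toSubmodule_adjoin_pair_eq_span hx hy
  have : Module.Finite A S := Module.Finite.iff_fg.mpr (hS ▸ fg_span G.finite_toSet)
  have hrank : (⊤ : Submodule A S).spanFinrank ≤ m * n := calc
    _ = (span A (G : Set B)).spanFinrank := by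
      rw [← hS]; exact spanFinrank_top (Subalgebra.toSubmodule S)
    _ ≤ G.card := by simpa using spanFinrank_span_le_ncard_of_finite G.finite_toSet
    _ ≤ m * n := Finset.card_mul_le.trans <| Nat.mul_le_mul
      (Finset.card_image_le.trans (by simp)) (Finset.card_image_le.trans (by simp))
  have hxy : x * y ∈ S :=
    mul_mem (Algebra.subset_adjoin (by simp)) (Algebra.subset_adjoin (by simp))
  exact ((of_finite (⟨x * y, hxy⟩ : S)).map S.val).mono hrank

end IsIntegralOfDegree

theorem stmt5 {A B : Type*} [CommRing A] [CommRing B] [Algebra A B] (x y : B) (m n : ℕ)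
    (hx : ∃ P : A[X], P.Monic ∧ P.natDegree = m ∧ aeval x P = 0)
    (hy : ∃ P : A[X], P.Monic ∧ P.natDegree = n ∧ aeval y P = 0) :
    ∃ P : A[X], P.Monic ∧ P.natDegree = n * m ∧ aeval (x * y) P = 0 :=
  Nat.mul_comm m n ▸ IsIntegralOfDegree.mul hx hy
end

section
/- Let A be a commutative ring, B a commutative A-algebra, (I_ρ)_{ρ∈ℕ} an ideal semifiltration of A, x, y ∈ B, and m, n ∈ ℕ. If x is m-integral over (A, (I_ρ)) and y is n-integral over A (in the ring sense), then x·y is (n·m)-integral over (A, (I_ρ)). -/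
/-!
Encode the semifiltration by the Rees algebra `R = {∑ cₖ Xᵏ ∈ A[X] | cₖ ∈ I k}`: comparing
coefficients of `X ^ k`, an element `z ∈ B` is `k`-integral over `(A, I)` exactly when `z X ∈ B[X]`
is a root of a monic polynomial of degree `k` over `R`. Since `y` (viewed as the constant `C y`) is
`n`-integral over `R` too, the theorem reduces to the ring-theoretic fact that a product of an
`m`-integral and an `n`-integral element is `m n`-integral, applied to `(x X) (C y) = (x y) X`.
That fact is Cayley–Hamilton for multiplication by `u w` on `R[u, w]`, which is spanned by the
`m n` monomials `uⁱ wʲ` with `i < m`, `j < n`.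
-/

open Polynomial
open scoped Pointwise

def RingHom.IsIntegralElemOfDegree {R S : Type*} [CommRing R] [CommRing S] (f : R →+* S)
    (k : ℕ) (x : S) : Prop :=
  ∃ p : R[X], p.Monic ∧ p.natDegree = k ∧ p.eval₂ f x = 0

namespace RingHom.IsIntegralElemOfDegree

variable {R S : Type*} [CommRing R] [CommRing S] {f : R →+* S} {k : ℕ} {x : S}

theorem of_natDegree_le [Nontrivial R] {p : R[X]} (hp : p.Monic) (hk : p.natDegree ≤ k)
    (hpx : p.eval₂ f x = 0) : f.IsIntegralElemOfDegree k x :=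
  ⟨p * X ^ (k - p.natDegree), hp.mul (monic_X_pow _), by
    rw [natDegree_mul_X_pow _ hp.ne_zero]; omega, by rw [eval₂_mul, hpx, zero_mul]⟩

theorem of_sum_eq_zero [Nontrivial R] (c : ℕ → R) (hc : c k = 1)
    (h : ∑ i ∈ Finset.range (k + 1), f (c i) * x ^ i = 0) : f.IsIntegralElemOfDegree k x := by
  set p : R[X] := ∑ i ∈ Finset.range (k + 1), C (c i) * X ^ i
  have hdeg : p.natDegree ≤ k := natDegree_sum_le_of_forall_le _ _ fun i hi =>
    (natDegree_C_mul_X_pow_le _ _).trans (Nat.le_of_lt_succ (Finset.mem_range.mp hi))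
  have hcoeff : p.coeff k = 1 := by simp [p, hc]
  exact of_natDegree_le (monic_of_natDegree_le_of_coeff_eq_one k hdeg hcoeff) hdeg
    (by simpa [p, eval₂_finsetSum] using h)

theorem exists_sum_eq_zero (hx : f.IsIntegralElemOfDegree k x) :
    ∃ p : R[X], p.coeff k = 1 ∧ ∑ i ∈ Finset.range (k + 1), f (p.coeff i) * x ^ i = 0 := by
  obtain ⟨p, hp, rfl, hpx⟩ := hx
  exact ⟨p, hp.coeff_natDegree, by rwa [eval₂_eq_sum_range] at hpx⟩

theorem map {S' : Type*} [CommRing S'] (hx : f.IsIntegralElemOfDegree k x) (φ : S →+* S') :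
    (φ.comp f).IsIntegralElemOfDegree k (φ x) := by
  obtain ⟨p, hp, hpk, hpx⟩ := hx
  exact ⟨p, hp, hpk, by rw [← hom_eval₂, hpx, map_zero]⟩

theorem tower_top [Nontrivial R] {A : Type*} [CommRing A] {g : A →+* R}
    (hx : (f.comp g).IsIntegralElemOfDegree k x) : f.IsIntegralElemOfDegree k x := by
  obtain ⟨p, hp, hpk, hpx⟩ := hx
  exact ⟨p.map g, hp.map g, by rw [hp.natDegree_map, hpk], by rwa [eval₂_map]⟩

end RingHom.IsIntegralElemOfDegree

section

variable {R S : Type*} [CommRing R] [CommRing S] [Algebra R S]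

theorem Algebra.exists_finset_card_le_span_eq_adjoin_pair {x y : S} {p q : R[X]} (hp : p.Monic)
    (hpx : aeval x p = 0) (hq : q.Monic) (hqy : aeval y q = 0) :
    ∃ s : Finset S, s.card ≤ p.natDegree * q.natDegree ∧
      Submodule.span R (s : Set S) = Subalgebra.toSubmodule (Algebra.adjoin R {x, y}) := by
  classical
  refine ⟨(Finset.range p.natDegree).image (x ^ ·) * (Finset.range q.natDegree).image (y ^ ·),
    Finset.card_mul_le.trans (Nat.mul_le_mul ?_ ?_), ?_⟩
  · exact Finset.card_image_le.trans (Finset.card_range _).le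
  · exact Finset.card_image_le.trans (Finset.card_range _).le
  rw [Set.insert_eq, Algebra.adjoin_union_coe_submodule,
    ← Submodule.span_range_natDegree_eq_adjoin hp hpx,
    ← Submodule.span_range_natDegree_eq_adjoin hq hqy, Submodule.span_mul_span, Finset.coe_mul]

theorem Subalgebra.exists_monic_natDegree_le_aeval_eq_zero (T : Subalgebra R S) (s : Finset S)
    (hs : Submodule.span R (s : Set S) = Subalgebra.toSubmodule T) {z : S} (hz : z ∈ T) :
    ∃ p : R[X], p.Monic ∧ p.natDegree ≤ s.card ∧ aeval z p = 0 := by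
  have : Module.Finite R T := Module.Finite.iff_fg.mpr ⟨s, hs⟩
  obtain ⟨p, hp, hpk, hpz⟩ :=
    LinearMap.exists_monic_and_natDegree_eq_and_aeval_eq_zero R (Algebra.lmul R T ⟨z, hz⟩)
  refine ⟨p, hp, ?_, ?_⟩
  · rw [hpk, Submodule.spanFinrank_top (Subalgebra.toSubmodule T), ← hs]
    exact (Submodule.spanFinrank_span_le_ncard_of_finite s.finite_toSet).trans
      (Set.ncard_coe_finset s).le
  rw [aeval_algHom_apply] at hpz
  have hpz' : aeval (⟨z, hz⟩ : T) p = 0 := Algebra.lmul_injective (R := R) (by rw [hpz, map_zero])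
  simpa using congrArg Subtype.val hpz'

end

theorem RingHom.IsIntegralElemOfDegree.mul {R S : Type*} [CommRing R] [Nontrivial R] [CommRing S]
    {f : R →+* S} {m n : ℕ} {x y : S} (hx : f.IsIntegralElemOfDegree m x)
    (hy : f.IsIntegralElemOfDegree n y) : f.IsIntegralElemOfDegree (m * n) (x * y) := by
  let := f.toAlgebra
  obtain ⟨p, hp, rfl, hpx⟩ := hx
  obtain ⟨q, hq, rfl, hqy⟩ := hy
  obtain ⟨s, hs, hspan⟩ := Algebra.exists_finset_card_le_span_eq_adjoin_pair hp hpx hq hqy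
  have hxy : x * y ∈ Algebra.adjoin R {x, y} :=
    mul_mem (Algebra.subset_adjoin (by simp)) (Algebra.subset_adjoin (by simp))
  obtain ⟨r, hr, hrdeg, hrxy⟩ :=
    (Algebra.adjoin R {x, y}).exists_monic_natDegree_le_aeval_eq_zero s hspan hxy
  exact of_natDegree_le hr (hrdeg.trans hs) hrxy

section Semifiltration

variable {A : Type*} [CommRing A]

def IsSemifiltrationIntegral {B : Type*} [CommRing B] [Algebra A B] (I : ℕ → Ideal A) (k : ℕ)
    (z : B) : Prop :=
  ∃ a : ℕ → A, (∑ i ∈ Finset.range (k + 1), algebraMap A B (a i) * z ^ i = 0) ∧ a k = 1 ∧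
    ∀ i ≤ k, a i ∈ I (k - i)

def semifiltrationReesAlgebra (I : ℕ → Ideal A) (hI0 : I 0 = ⊤)
    (hImul : ∀ a b : ℕ, I a * I b ≤ I (a + b)) : Subalgebra A A[X] where
  carrier := {p | ∀ k, p.coeff k ∈ I k}
  add_mem' hp hq k := by
    rw [coeff_add]
    exact add_mem (hp k) (hq k)
  mul_mem' {p q} hp hq k := by
    rw [coeff_mul]
    refine sum_mem fun ij hij => ?_
    rw [← Finset.HasAntidiagonal.mem_antidiagonal.mp hij]
    exact hImul _ _ (Ideal.mul_mem_mul (hp ij.1) (hq ij.2))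
  algebraMap_mem' r k := by
    rw [Polynomial.algebraMap_apply, Algebra.algebraMap_self, RingHom.id_apply, coeff_C]
    split_ifs with hk
    · rw [hk, hI0]
      exact Submodule.mem_top
    · exact zero_mem _

variable (I : ℕ → Ideal A) (hI0 : I 0 = ⊤) (hImul : ∀ a b : ℕ, I a * I b ≤ I (a + b))

theorem monomial_mem_semifiltrationReesAlgebra {j : ℕ} {a : A} (ha : a ∈ I j) :
    monomial j a ∈ semifiltrationReesAlgebra I hI0 hImul := fun k => by
  rw [coeff_monomial]
  split_ifs with hk
  · rwa [← hk]
  · exact zero_mem _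

variable (B : Type*) [CommRing B] [Algebra A B]

noncomputable def semifiltrationReesAlgebra.toPolynomial :
    semifiltrationReesAlgebra I hI0 hImul →+* B[X] :=
  (mapRingHom (algebraMap A B)).comp (semifiltrationReesAlgebra I hI0 hImul).val.toRingHom

variable {I hI0 hImul B}

@[simp]
theorem semifiltrationReesAlgebra.toPolynomial_apply (r : semifiltrationReesAlgebra I hI0 hImul) :
    toPolynomial I hI0 hImul B r = (r : A[X]).map (algebraMap A B) :=
  rfl

variable (I hI0 hImul) in
theorem isSemifiltrationIntegral_iff [Nontrivial A] {k : ℕ} {z : B} :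
    IsSemifiltrationIntegral I k z ↔
      (semifiltrationReesAlgebra.toPolynomial I hI0 hImul B).IsIntegralElemOfDegree k (C z * X) := by
  constructor
  · rintro ⟨a, hsum, hak, haI⟩
    -- for `i > k` the truncated `k - i` is `0`, and `I 0 = ⊤`
    have haI' : ∀ i, a i ∈ I (k - i) := fun i => by
      by_cases hi : i ≤ k
      · exact haI i hi
      · rw [Nat.sub_eq_zero_of_le (Nat.le_of_not_le hi), hI0]
        exact Submodule.mem_top
    refine .of_sum_eq_zero (fun i => ⟨monomial (k - i) (a i),
      monomial_mem_semifiltrationReesAlgebra I hI0 hImul (haI' i)⟩) (by ext1; simp [hak]) ?_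
    have hterm : ∀ i ∈ Finset.range (k + 1), ((monomial (k - i) (a i)).map (algebraMap A B)) *
        (C z * X) ^ i = C (algebraMap A B (a i) * z ^ i) * X ^ k := fun i hi => by
      rw [map_monomial, ← C_mul_X_pow_eq_monomial, mul_pow, ← C_pow, C_mul,
        ← Nat.sub_add_cancel (Nat.le_of_lt_succ (Finset.mem_range.mp hi)), pow_add,
        Nat.add_sub_cancel]
      ring
    simp only [semifiltrationReesAlgebra.toPolynomial_apply]
    rw [Finset.sum_congr rfl hterm, ← Finset.sum_mul, ← map_sum, hsum, C_0, zero_mul]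
  · intro hz
    obtain ⟨q, hqk, hq⟩ := hz.exists_sum_eq_zero
    refine ⟨fun i => ((q.coeff i : semifiltrationReesAlgebra I hI0 hImul) : A[X]).coeff (k - i),
      ?_, by simp [hqk], fun i _ => (q.coeff i).2 (k - i)⟩
    have hterm : ∀ i ∈ Finset.range (k + 1), (semifiltrationReesAlgebra.toPolynomial I hI0 hImul B
        (q.coeff i) * (C z * X) ^ i).coeff k =
        algebraMap A B (((q.coeff i : semifiltrationReesAlgebra I hI0 hImul) : A[X]).coeff (k - i))
          * z ^ i := fun i hi => by
      rw [mul_pow, ← C_pow, ← mul_assoc, coeff_mul_X_pow',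
        if_pos (Nat.le_of_lt_succ (Finset.mem_range.mp hi)), coeff_mul_C,
        semifiltrationReesAlgebra.toPolynomial_apply, coeff_map]
    rw [← Finset.sum_congr rfl hterm, ← finsetSum_coeff, hq, coeff_zero]

theorem semifiltrationReesAlgebra.toPolynomial_comp_algebraMap :
    (toPolynomial I hI0 hImul B).comp (algebraMap A (semifiltrationReesAlgebra I hI0 hImul)) =
      C.comp (algebraMap A B) := by
  ext a
  simp

variable (I hI0 hImul) in
theorem semifiltrationReesAlgebra.isIntegralElemOfDegree_C [Nontrivial A] {k : ℕ} {y : B}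
    (hy : (algebraMap A B).IsIntegralElemOfDegree k y) :
    (toPolynomial I hI0 hImul B).IsIntegralElemOfDegree k (C y) :=
  .tower_top (g := algebraMap A (semifiltrationReesAlgebra I hI0 hImul)) <| by
    rw [toPolynomial_comp_algebraMap]
    exact hy.map C

end Semifiltration

theorem stmt16 {A B : Type*} [CommRing A] [CommRing B] [Algebra A B] (I : ℕ → Ideal A)
    (hI0 : I 0 = ⊤) (hImul : ∀ a b : ℕ, I a * I b ≤ I (a + b)) (x y : B) (m n : ℕ)
    (hx : ∃ a : ℕ → A, (∑ k ∈ Finset.range (m + 1), algebraMap A B (a k) * x ^ k = 0) ∧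
      a m = 1 ∧ ∀ i ≤ m, a i ∈ I (m - i))
    (hy : ∃ P : A[X], P.Monic ∧ P.natDegree = n ∧ aeval y P = 0) :
    ∃ a : ℕ → A, (∑ k ∈ Finset.range (n * m + 1), algebraMap A B (a k) * (x * y) ^ k = 0) ∧
      a (n * m) = 1 ∧ ∀ i ≤ n * m, a i ∈ I (n * m - i) := by
  rcases subsingleton_or_nontrivial A with hA | hA
  · have := (algebraMap A B).codomain_trivial
    exact ⟨0, Subsingleton.elim _ _, Subsingleton.elim _ _, fun _ _ => zero_mem _⟩
  have hxX := (isSemifiltrationIntegral_iff I hI0 hImul).mp hx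
  have hyC := semifiltrationReesAlgebra.isIntegralElemOfDegree_C I hI0 hImul hy
  rw [mul_comm n m]
  refine (isSemifiltrationIntegral_iff I hI0 hImul).mpr ?_
  convert hxX.mul hyC using 1
  rw [C_mul]
  ring
end
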